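/- arXiv:1304.2074 — 2 statements merged into one kernel-verified Lean document; each statement's English description precedes it below -/
import Mathlib

section
/- For every ε>0 and every x ∈ ℝ, |π_ε(x) − max(x,0)| ≤ 35ε/256. -/
noncomputable def piEps (ε : ℝ) (x : ℝ) : ℝ :=
  if ε ≤ x then x
  else if x ≤ -ε then 0
  else 35*ε/256 + (1/2)*x + (35/(64*ε))*x^2 + (-(35/(128*ε^3)))*x^4
        + (7/(64*ε^5))*x^6 + (-(5/(256*ε^7)))*x^8

lemma auxA (ε y : ℝ) (hε : 0 < ε) (hy : 0 ≤ y) (hyε : y ≤ ε) :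
    0 ≤ 35*ε^8 - 128*y*ε^7 + 140*y^2*ε^6 - 70*y^4*ε^4 + 28*y^6*ε^2 - 5*y^8 := by
  have h : 35*ε^8 - 128*y*ε^7 + 140*y^2*ε^6 - 70*y^4*ε^4 + 28*y^6*ε^2 - 5*y^8
      = (ε - y)^5 * (35*ε^3 + 47*ε^2*y + 25*ε*y^2 + 5*y^3) := by ring
  rw [h]
  have h1 : 0 ≤ ε - y := by linarith
  positivity

lemma auxB (ε y : ℝ) (hε : 0 < ε) (hy : 0 ≤ y) (hyε : y ≤ ε) :
    0 ≤ 128*y*ε^7 - 140*y^2*ε^6 + 70*y^4*ε^4 - 28*y^6*ε^2 + 5*y^8 := by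
  have hd : 0 ≤ ε - y := by linarith
  have h47 : 0 ≤ 47*ε^4 - 18*ε^2*y^2 := by nlinarith [mul_nonneg (mul_nonneg hd (by linarith : (0:ℝ) ≤ ε + y)) (sq_nonneg ε), pow_nonneg hε.le 4]
  have hA : 0 ≤ (ε*y - y^2) * (47*ε^4 - 18*ε^2*y^2) :=
    mul_nonneg (by nlinarith [mul_nonneg hy hd]) h47
  have hBp : 0 ≤ 5*y^3*(ε+y)^2*(ε-y) := by positivity
  have hC : 0 ≤ ε^3*(y-ε)^2*(y+2*ε) := by positivity
  have hS : 0 ≤ 93*ε^6 - 47*ε^5*y - 47*ε^4*y^2 + 23*ε^3*y^3 + 23*ε^2*y^4 - 5*ε*y^5 - 5*y^6 := by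
    nlinarith [hA, hBp, hC, mul_nonneg hy (pow_nonneg hε.le 5), pow_nonneg hε.le 6]
  have hR : 0 ≤ 128*ε^7 - 140*y*ε^6 + 70*y^3*ε^4 - 28*y^5*ε^2 + 5*y^7 := by
    nlinarith [mul_nonneg hd hS, pow_pos hε 7]
  nlinarith [mul_nonneg hy hR]

theorem piEps_error_bound (ε : ℝ) (hε : 0 < ε) (x : ℝ) :
    |piEps ε x - max x 0| ≤ 35*ε/256 := by
  unfold piEps
  have hB : (0:ℝ) ≤ 35*ε/256 := by positivity
  have hne : (256:ℝ)*ε^7 ≠ 0 := by positivity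
  have hpos : (0:ℝ) < 256*ε^7 := by positivity
  split_ifs with h1 h2
  · have : max x 0 = x := max_eq_left (le_trans hε.le h1)
    simp [this, hB]
  · have : max x 0 = 0 := max_eq_right (by linarith)
    simp [this, hB]
  · push_neg at h1 h2
    have hεne : ε ≠ 0 := hε.ne'
    rcases le_or_gt 0 x with hx | hx
    · have hmax : max x 0 = x := max_eq_left hx
      rw [hmax, abs_le]
      have hA := auxA ε x hε hx h1.le
      have hBB := auxB ε x hε hx h1.le
      constructor
      · rw [← sub_nonneg]
        have heq : (35*ε/256 + (1/2)*x + (35/(64*ε))*x^2 + (-(35/(128*ε^3)))*x^4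
            + (7/(64*ε^5))*x^6 + (-(5/(256*ε^7)))*x^8 - x) - -(35*ε/256)
            = (35*ε^8 + (35*ε^8 - 128*x*ε^7 + 140*x^2*ε^6 - 70*x^4*ε^4 + 28*x^6*ε^2 - 5*x^8)) / (256*ε^7) := by
          field_simp
          ring
        rw [heq]
        apply div_nonneg _ (by positivity)
        linarith
      · rw [← sub_nonneg]
        have heq : 35*ε/256 - (35*ε/256 + (1/2)*x + (35/(64*ε))*x^2 + (-(35/(128*ε^3)))*x^4
            + (7/(64*ε^5))*x^6 + (-(5/(256*ε^7)))*x^8 - x)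
            = (128*x*ε^7 - 140*x^2*ε^6 + 70*x^4*ε^4 - 28*x^6*ε^2 + 5*x^8) / (256*ε^7) := by
          field_simp
          ring
        rw [heq]
        apply div_nonneg _ (by positivity)
        linarith
    · have hmax : max x 0 = 0 := max_eq_right hx.le
      rw [hmax, sub_zero, abs_le]
      have hy : 0 ≤ -x := by linarith
      have hyε : -x ≤ ε := by linarith
      have hA := auxA ε (-x) hε hy hyε
      have hBB := auxB ε (-x) hε hy hyε
      constructor
      · rw [← sub_nonneg]
        have heq : (35*ε/256 + (1/2)*x + (35/(64*ε))*x^2 + (-(35/(128*ε^3)))*x^4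
            + (7/(64*ε^5))*x^6 + (-(5/(256*ε^7)))*x^8) - -(35*ε/256)
            = (35*ε^8 + (35*ε^8 - 128*(-x)*ε^7 + 140*(-x)^2*ε^6 - 70*(-x)^4*ε^4 + 28*(-x)^6*ε^2 - 5*(-x)^8)) / (256*ε^7) := by
          field_simp
          ring
        rw [heq]
        apply div_nonneg _ (by positivity)
        linarith
      · rw [← sub_nonneg]
        have heq : 35*ε/256 - (35*ε/256 + (1/2)*x + (35/(64*ε))*x^2 + (-(35/(128*ε^3)))*x^4
            + (7/(64*ε^5))*x^6 + (-(5/(256*ε^7)))*x^8)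
            = (128*(-x)*ε^7 - 140*(-x)^2*ε^6 + 70*(-x)^4*ε^4 - 28*(-x)^6*ε^2 + 5*(-x)^8) / (256*ε^7) := by
          field_simp
          ring
        rw [heq]
        apply div_nonneg _ (by positivity)
        linarith
end

section
/- For a constant matrix A and b(τ) = ∑_{j=0}^{p−1} (τ^j/j!) b_{j+1} a vector polynomial, the exact solution of f' = A f + b satisfies f(τ_n+Δτ) = φ₀(Δτ A) f(τ_n) + ∑_{j=0}^{p−1} ∑_{l=0}^{j} (τ_n^{j−l}/(j−l)!) Δτ^{l+1} φ_{l+1}(Δτ A) b_{j+1}, where φ_l are the matrix φ-functions φ_l(M) = ∑_{k≥0} M^k/(k+l)!. -/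
/-- Matrix φ-function: φ_l(M) = ∑_{k≥0} M^k/(k+l)!. -/
noncomputable def phiMat (N : ℕ) (l : ℕ) (M : Matrix (Fin N) (Fin N) ℝ) :
    Matrix (Fin N) (Fin N) ℝ :=
  ∑' k : ℕ, (1 / (Nat.factorial (k + l) : ℝ)) • M ^ k

/-!
With `ψ_l(t) = t ^ l • φ_l(t • A)` one has `ψ_{l+1}' = ψ_l`, `ψ_l(t) = t ^ l / l! + A ψ_{l+1}(t)`,
`ψ_0(0) = 1` and `ψ_{l+1}(0) = 0`. Together with the binomial expansion of `(τ + s) ^ j / j!`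
this shows that the right-hand side, read as a function of `s = Δτ`, solves the same linear ODE
`x' = A x + b(τₙ + s)` as `s ↦ f(τₙ + s)` and agrees with it at `s = 0`; the Lipschitz uniqueness
theorem identifies the two.
-/

open Finset

open scoped Nat Matrix

-- Any algebra norm on matrices would do: only their product topology enters the statement.
open scoped Matrix.Norms.Operator

theorem add_pow_div_factorial (x y : ℝ) (j : ℕ) :
    (x + y) ^ j / j ! = ∑ l ∈ range (j + 1), x ^ (j - l) / (j - l)! * (y ^ l / l !) := by
  rw [add_comm x y, add_pow, sum_div]
  refine sum_congr rfl fun l hl => ?_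
  rw [Nat.cast_choose ℝ (Nat.lt_succ_iff.mp (mem_range.mp hl))]
  field_simp

theorem hasDerivAt_pow_succ_div_factorial (n : ℕ) (x : ℝ) :
    HasDerivAt (fun s : ℝ => s ^ (n + 1) / (n + 1)!) (x ^ n / n !) x := by
  refine ((hasDerivAt_pow (n + 1) x).div_const ((n + 1)! : ℝ)).congr_deriv ?_
  rw [Nat.factorial_succ, Nat.add_sub_cancel]
  push_cast
  field_simp

section ScaledPhi

variable {𝔸 : Type*} [NormedRing 𝔸] [NormedAlgebra ℝ 𝔸] (A : 𝔸)

/-- `ψ_l(t) = t ^ l • φ_l(t • A)`, normalised so that `ψ_{l+1}' = ψ_l`. -/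
noncomputable def scaledPhi (l : ℕ) (t : ℝ) : 𝔸 :=
  ∑' k : ℕ, (t ^ (k + l) / (k + l)! : ℝ) • A ^ k

theorem norm_scaledPhi_term_le {R t : ℝ} (ht : |t| ≤ R) (l k : ℕ) :
    ‖(t ^ (k + l) / (k + l)! : ℝ) • A ^ k‖ ≤ R ^ l * ‖((k ! : ℝ)⁻¹) • (R • A) ^ k‖ := by
  have hR : 0 ≤ R := (abs_nonneg t).trans ht
  rw [smul_pow, smul_smul, norm_smul, norm_smul, Real.norm_eq_abs, Real.norm_eq_abs, abs_div,
    abs_pow, Nat.abs_cast, abs_mul, abs_inv, Nat.abs_cast, abs_pow, abs_of_nonneg hR]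
  calc |t| ^ (k + l) / (k + l)! * ‖A ^ k‖ ≤ R ^ (k + l) / k ! * ‖A ^ k‖ := by
        gcongr
        exact Nat.le_add_right k l
    _ = R ^ l * ((k ! : ℝ)⁻¹ * R ^ k * ‖A ^ k‖) := by rw [pow_add]; ring

theorem scaledPhi_succ_zero (l : ℕ) : scaledPhi A (l + 1) 0 = 0 := by
  simp [scaledPhi]

/-- The solution of `M' = A M + ((τ + s) ^ j / j!) • 1`, `M 0 = 0`. -/
noncomputable def monomialDuhamel (τ : ℝ) (j : ℕ) (s : ℝ) : 𝔸 :=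
  ∑ l ∈ range (j + 1), (τ ^ (j - l) / (j - l)! : ℝ) • scaledPhi A (l + 1) s

variable [CompleteSpace 𝔸]

theorem summable_scaledPhi (l : ℕ) (t : ℝ) :
    Summable fun k : ℕ => (t ^ (k + l) / (k + l)! : ℝ) • A ^ k :=
  .of_norm_bounded ((NormedSpace.norm_expSeries_summable' (𝕂 := ℝ) (|t| • A)).mul_left _)
    (norm_scaledPhi_term_le A le_rfl l)

theorem scaledPhi_eq_add_mul_scaledPhi_succ (l : ℕ) (t : ℝ) :
    scaledPhi A l t = (t ^ l / l ! : ℝ) • 1 + A * scaledPhi A (l + 1) t := by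
  rw [scaledPhi, (summable_scaledPhi A l t).tsum_eq_zero_add, scaledPhi,
    ← (summable_scaledPhi A (l + 1) t).tsum_mul_left]
  congr 1
  · simp
  · refine tsum_congr fun k => ?_
    rw [pow_succ', mul_smul_comm, show k + 1 + l = k + (l + 1) by ring]

theorem scaledPhi_zero_zero : scaledPhi A 0 0 = 1 := by
  simpa [scaledPhi_succ_zero] using scaledPhi_eq_add_mul_scaledPhi_succ A 0 0

theorem hasDerivAt_scaledPhi_succ (l : ℕ) (t : ℝ) :
    HasDerivAt (scaledPhi A (l + 1)) (scaledPhi A l t) t := by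
  have ht : t ∈ Metric.ball (0 : ℝ) (|t| + 1) := by simp
  refine hasDerivAt_tsum_of_isPreconnected
    (g := fun k s => (s ^ (k + (l + 1)) / (k + (l + 1))! : ℝ) • A ^ k)
    (g' := fun k s => (s ^ (k + l) / (k + l)! : ℝ) • A ^ k)
    ((NormedSpace.norm_expSeries_summable' (𝕂 := ℝ) ((|t| + 1) • A)).mul_left ((|t| + 1) ^ l))
    Metric.isOpen_ball (convex_ball _ _).isPreconnected (fun k y _ => ?_) (fun k y hy => ?_) ht
    (summable_scaledPhi A (l + 1) t) ht
  · simpa only [← add_assoc] using (hasDerivAt_pow_succ_div_factorial (k + l) y).smul_const (A ^ k)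
  · refine norm_scaledPhi_term_le A ?_ l k
    simpa using (Metric.mem_ball.mp hy).le

theorem hasDerivAt_scaledPhi_zero (t : ℝ) :
    HasDerivAt (scaledPhi A 0) (A * scaledPhi A 0 t) t := by
  have h : ∀ s, scaledPhi A 0 s = 1 + A * scaledPhi A 1 s := fun s => by
    simpa using scaledPhi_eq_add_mul_scaledPhi_succ A 0 s
  exact (((hasDerivAt_scaledPhi_succ A 0 t).const_mul A).const_add 1).congr_of_eventuallyEq
    (.of_forall h)

theorem hasDerivAt_monomialDuhamel (τ : ℝ) (j : ℕ) (s : ℝ) :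
    HasDerivAt (monomialDuhamel A τ j)
      (A * monomialDuhamel A τ j s + ((τ + s) ^ j / j ! : ℝ) • 1) s := by
  have h := HasDerivAt.fun_sum (u := range (j + 1)) fun l _ =>
    (hasDerivAt_scaledPhi_succ A l s).const_smul (τ ^ (j - l) / (j - l)! : ℝ)
  refine h.congr_deriv ?_
  rw [sum_congr rfl fun l _ => by rw [scaledPhi_eq_add_mul_scaledPhi_succ A l s, smul_add],
    sum_add_distrib, add_comm]
  simp only [smul_smul, ← sum_smul, ← add_pow_div_factorial, monomialDuhamel, mul_sum,
    mul_smul_comm]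

end ScaledPhi

section Matrix

variable {n : Type*} [Fintype n]

theorem scaledPhi_eq_smul_phiMat {N : ℕ} (A : Matrix (Fin N) (Fin N) ℝ) (l : ℕ) (t : ℝ) :
    scaledPhi A l t = t ^ l • phiMat N l (t • A) := by
  rw [scaledPhi, phiMat, ← tsum_const_smul'']
  refine tsum_congr fun k => ?_
  rw [smul_pow, smul_smul, smul_smul, pow_add]
  ring_nf

theorem HasDerivAt.mulVec_const {m : Type*} [Fintype m] {M : ℝ → Matrix m n ℝ}
    {M' : Matrix m n ℝ} {t : ℝ} (h : HasDerivAt M M' t) (v : n → ℝ) :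
    HasDerivAt (fun s => M s *ᵥ v) (M' *ᵥ v) t :=
  (((Matrix.mulVecBilin ℝ ℝ).flip v).toContinuousLinearMap.hasFDerivAt.comp_hasDerivAt t h :)

theorem hasDerivAt_polynomialDuhamel [DecidableEq n] (A : Matrix n n ℝ) (x₀ : n → ℝ)
    (bcoef : ℕ → n → ℝ) (p : ℕ) (τ s : ℝ) :
    HasDerivAt
      (fun s => scaledPhi A 0 s *ᵥ x₀ + ∑ j ∈ range p, monomialDuhamel A τ j s *ᵥ bcoef (j + 1))
      (A *ᵥ (scaledPhi A 0 s *ᵥ x₀ + ∑ j ∈ range p, monomialDuhamel A τ j s *ᵥ bcoef (j + 1))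
        + ∑ j ∈ range p, ((τ + s) ^ j / j ! : ℝ) • bcoef (j + 1)) s := by
  have h := ((hasDerivAt_scaledPhi_zero A s).mulVec_const x₀).add <|
    HasDerivAt.fun_sum (u := range p) fun j _ =>
      (hasDerivAt_monomialDuhamel A τ j s).mulVec_const (bcoef (j + 1))
  refine h.congr_deriv ?_
  simp only [Matrix.add_mulVec, Matrix.mulVec_add, Matrix.mulVec_mulVec, Matrix.smul_mulVec,
    Matrix.one_mulVec, Matrix.mulVec_sum, sum_add_distrib]
  abel

theorem eq_of_hasDerivAt_mulVec_add (A : Matrix n n ℝ) (c : ℝ → n → ℝ) {x y : ℝ → n → ℝ}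
    (hx : ∀ s, HasDerivAt x (A *ᵥ x s + c s) s) (hy : ∀ s, HasDerivAt y (A *ᵥ y s + c s) s)
    {s₀ : ℝ} (h₀ : x s₀ = y s₀) : x = y := by
  set T := LinearMap.toContinuousLinearMap (Matrix.mulVecLin A)
  have hlip (s : ℝ) : LipschitzWith ‖T‖₊ fun z => A *ᵥ z + c s :=
    .of_dist_le_mul fun z w => by
      rw [dist_add_right]; exact T.lipschitz.dist_le_mul z w
  exact ODE_solution_unique_univ (s := fun _ => Set.univ) (fun s => (hlip s).lipschitzOnWith)
    (fun s => ⟨hx s, trivial⟩) (fun s => ⟨hy s, trivial⟩) h₀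

end Matrix

theorem exponential_integrator_polynomial_general (N p : ℕ)
    (A : Matrix (Fin N) (Fin N) ℝ) (bcoef : ℕ → Fin N → ℝ)
    (b : ℝ → Fin N → ℝ)
    (hb : ∀ τ, b τ = ∑ j ∈ Finset.range p,
      (τ ^ j / (Nat.factorial j : ℝ)) • bcoef (j + 1))
    (f : ℝ → Fin N → ℝ)
    (hf : ∀ τ, HasDerivAt f (A.mulVec (f τ) + b τ) τ)
    (τn Δτ : ℝ) :
    f (τn + Δτ)
      = (phiMat N 0 (Δτ • A)).mulVec (f τn)
        + ∑ j ∈ Finset.range p, ∑ l ∈ Finset.range (j + 1),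
            (τn ^ (j - l) / (Nat.factorial (j - l) : ℝ) * Δτ ^ (l + 1)) •
              (phiMat N (l + 1) (Δτ • A)).mulVec (bcoef (j + 1)) := by
  have hshift (s : ℝ) : HasDerivAt (fun s => f (τn + s)) (A *ᵥ f (τn + s) + b (τn + s)) s :=
    (hf (τn + s)).comp_const_add τn s
  have hsol : (fun s => f (τn + s)) = fun s =>
      scaledPhi A 0 s *ᵥ f τn + ∑ j ∈ range p, monomialDuhamel A τn j s *ᵥ bcoef (j + 1) := by
    refine eq_of_hasDerivAt_mulVec_add A (fun s => b (τn + s)) hshift (fun s => ?_) (s₀ := 0) ?_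
    · simpa only [hb] using hasDerivAt_polynomialDuhamel A (f τn) bcoef p τn s
    · simp [scaledPhi_zero_zero, monomialDuhamel, scaledPhi_succ_zero]
  rw [congrFun hsol Δτ]
  simp only [monomialDuhamel, scaledPhi_eq_smul_phiMat, Matrix.sum_mulVec, Matrix.smul_mulVec,
    smul_smul, pow_zero, one_smul]

/-- Exact exponential-integrator representation of the solution of
f' = A f + b with polynomial b(τ) = ∑_{j=0}^{p-1} τ^j b_{j+1}/j!. -/
theorem exponential_integrator_polynomial (N p : ℕ) (hp : 0 < p)
    (A : Matrix (Fin N) (Fin N) ℝ) (bcoef : ℕ → Fin N → ℝ)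
    (b : ℝ → Fin N → ℝ)
    (hb : ∀ τ, b τ = ∑ j ∈ Finset.range p,
      (τ ^ j / (Nat.factorial j : ℝ)) • bcoef (j + 1))
    (f : ℝ → Fin N → ℝ)
    (hf : ∀ τ, HasDerivAt f (A.mulVec (f τ) + b τ) τ)
    (τn Δτ : ℝ) (hτn : 0 ≤ τn) (hΔτ : 0 < Δτ) :
    f (τn + Δτ)
      = (phiMat N 0 (Δτ • A)).mulVec (f τn)
        + ∑ j ∈ Finset.range p, ∑ l ∈ Finset.range (j + 1),
            (τn ^ (j - l) / (Nat.factorial (j - l) : ℝ) * Δτ ^ (l + 1)) •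
              (phiMat N (l + 1) (Δτ • A)).mulVec (bcoef (j + 1)) :=
  exponential_integrator_polynomial_general N p A bcoef b hb f hf τn Δτ
end
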